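/- Let Δ > 0, ω ≥ 0, χ > 0 and ρ₁ > 0 be real numbers with 0 < ρ₁² − 4·ω·χ ≤ 4·Δ·χ. Suppose λ > 0 satisfies, for every t ∈ (0,1], the inequality (Δ + ω/t)·λ² − ρ₁·λ + t·χ ≥ 0. Then λ ≥ (ρ₁² − 4·ω·χ)/(2·Δ·ρ₁). -/
import Mathlib


theorem stmt_5 (Δ ω χ ρ₁ lam : ℝ) (hΔ : 0 < Δ) (hω : 0 ≤ ω) (hχ : 0 < χ)
    (hρ₁ : 0 < ρ₁) (hdisc1 : 0 < ρ₁ ^ 2 - 4 * ω * χ)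
    (hdisc2 : ρ₁ ^ 2 - 4 * ω * χ ≤ 4 * Δ * χ)
    (hlam : 0 < lam)
    (h : ∀ t : ℝ, 0 < t → t ≤ 1 → (Δ + ω / t) * lam ^ 2 - ρ₁ * lam + t * χ ≥ 0) :
    lam ≥ (ρ₁ ^ 2 - 4 * ω * χ) / (2 * Δ * ρ₁) := by
  by_contra h'
  push_neg at h'
  have hlam2 : 2 * Δ * ρ₁ * lam < ρ₁ ^ 2 - 4 * ω * χ := by
    have := (lt_div_iff₀ (by positivity : (0:ℝ) < 2 * Δ * ρ₁)).mp h'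
    linarith
  set B := ρ₁ - Δ * lam with hBdef
  have hBpos : 0 < B := by nlinarith [mul_nonneg hω hχ.le]
  have hB2 : 4 * ω * χ < B ^ 2 := by
    have h1 : ρ₁ ^ 2 + 4 * ω * χ < 2 * ρ₁ * B := by
      simp only [hBdef]; nlinarith
    nlinarith [sq_nonneg (ρ₁ ^ 2 - 4 * ω * χ), mul_pos hρ₁ hBpos,
      mul_lt_mul_of_pos_left h1 (by positivity : (0:ℝ) < ρ₁ ^ 2 + 4 * ω * χ + 2 * ρ₁ * B)]
  set t₀ := lam * B / (2 * χ) with ht₀def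
  have ht₀pos : 0 < t₀ := by positivity
  have ht₀le : t₀ ≤ 1 := by
    rw [ht₀def, div_le_one (by positivity)]
    have hBle : B ≤ ρ₁ := by nlinarith
    nlinarith [mul_pos hΔ hlam, mul_lt_mul_of_pos_left hlam2 hΔ]
  have hkey := h t₀ ht₀pos ht₀le
  have hne : t₀ ≠ 0 := ne_of_gt ht₀pos
  have hexp : ((Δ + ω / t₀) * lam ^ 2 - ρ₁ * lam + t₀ * χ) * t₀
      = χ * t₀ ^ 2 + (Δ * lam ^ 2 - ρ₁ * lam) * t₀ + ω * lam ^ 2 := by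
    field_simp
    ring
  have hval : χ * t₀ ^ 2 + (Δ * lam ^ 2 - ρ₁ * lam) * t₀ + ω * lam ^ 2 < 0 := by
    have ht₀ : t₀ = lam * B / (2 * χ) := ht₀def
    have hrw : Δ * lam ^ 2 - ρ₁ * lam = -(lam * B) := by rw [hBdef]; ring
    rw [ht₀, hrw]
    have hχne : (2 * χ) ≠ 0 := by positivity
    rw [div_pow]
    have : χ * ((lam * B) ^ 2 / (2 * χ) ^ 2) + -(lam * B) * (lam * B / (2 * χ)) + ω * lam ^ 2
        = (lam ^ 2 * (4 * ω * χ - B ^ 2)) / (4 * χ) := by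
      field_simp
      ring
    rw [this]
    apply div_neg_of_neg_of_pos _ (by positivity)
    have hneg : 4 * ω * χ - B ^ 2 < 0 := by linarith
    exact mul_neg_of_pos_of_neg (by positivity) hneg
  nlinarith [mul_le_mul_of_nonneg_right hkey (le_of_lt ht₀pos)]
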